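/- If an open graph (G,I,O) admits a gflow, then it admits a maximally delayed gflow, and every maximally delayed gflow has minimal depth among all gflows of (G,I,O). -/
import Mathlib


open Set

variable {V : Type*}

def oddN (G : SimpleGraph V) (K : Set V) : Set V :=
  {u | Odd {v | v ∈ K ∧ G.Adj u v}.ncard}

def IsSPO (lt : V → V → Prop) : Prop :=
  (∀ a, ¬ lt a a) ∧ (∀ a b c, lt a b → lt b c → lt a c)

def IsCausalFlow (G : SimpleGraph V) (I O : Set V) (g : V → V) (lt : V → V → Prop) : Prop :=
  IsSPO lt ∧ (∀ i, i ∉ O → g i ∉ I) ∧ (∀ i, i ∉ O → lt i (g i)) ∧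
  (∀ i, i ∉ O → ∀ j, G.Adj (g i) j → j = i ∨ lt i j) ∧
  (∀ i, i ∉ O → G.Adj (g i) i)

def IsGFlow (G : SimpleGraph V) (I O : Set V) (g : V → Set V) (lt : V → V → Prop) : Prop :=
  IsSPO lt ∧ (∀ i, i ∉ O → (g i).Nonempty ∧ g i ∩ I = ∅) ∧
  (∀ i, i ∉ O → ∀ j ∈ g i, lt i j) ∧
  (∀ i, i ∉ O → ∀ j ∈ oddN G (g i), j = i ∨ lt i j) ∧
  (∀ i, i ∉ O → i ∈ oddN G (g i))

def maxSet (lt : V → V → Prop) (X : Set V) : Set V :=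
  {u ∈ X | ∀ v ∈ X, ¬ lt u v}

def rest (lt : V → V → Prop) : ℕ → Set V
  | 0 => Set.univ
  | k+1 => rest lt k \ maxSet lt (rest lt k)

def layer (lt : V → V → Prop) (k : ℕ) : Set V := maxSet lt (rest lt k)

def cumul (lt : V → V → Prop) (k : ℕ) : Set V := Set.univ \ rest lt (k+1)

def MoreDelayed (lt lt' : V → V → Prop) : Prop :=
  (∀ k, (cumul lt' k).ncard ≤ (cumul lt k).ncard) ∧
  ∃ k, (cumul lt' k).ncard < (cumul lt k).ncard

noncomputable def flowDepth (lt : V → V → Prop) : ℕ := sInf {d | layer lt (d+1) = ∅}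

def MaxDelayedCausalFlow (G : SimpleGraph V) (I O : Set V) (g : V → V) (lt : V → V → Prop) : Prop :=
  IsCausalFlow G I O g lt ∧
  ∀ g' lt', IsCausalFlow G I O g' lt' → ¬ MoreDelayed lt' lt

def MaxDelayedGFlow (G : SimpleGraph V) (I O : Set V) (g : V → Set V) (lt : V → V → Prop) : Prop :=
  IsGFlow G I O g lt ∧
  ∀ g' lt', IsGFlow G I O g' lt' → ¬ MoreDelayed lt' lt

lemma maxSet_nonempty [Finite V] {lt : V → V → Prop} (h : IsSPO lt) {X : Set V}
    (hX : X.Nonempty) : (maxSet lt X).Nonempty := by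
  haveI : IsIrrefl V (flip lt) := ⟨fun a => h.1 a⟩
  haveI : IsTrans V (flip lt) := ⟨fun a b c hab hbc => h.2 _ _ _ hbc hab⟩
  obtain ⟨a, ha, hmax⟩ := (Finite.wellFounded_of_trans_of_irrefl (flip lt)).has_min X hX
  exact ⟨a, ha, fun v hv => hmax v hv⟩

lemma rest_succ_subset (lt : V → V → Prop) (k : ℕ) : rest lt (k+1) ⊆ rest lt k :=
  diff_subset

lemma rest_antitone (lt : V → V → Prop) : Antitone (rest lt) := by
  apply antitone_nat_of_succ_le
  exact fun n => rest_succ_subset lt n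

lemma rest_card [Fintype V] {lt : V → V → Prop} (h : IsSPO lt) :
    ∀ k, rest lt k = ∅ ∨ (rest lt k).ncard + k ≤ Fintype.card V := by
  intro k
  induction k with
  | zero => right; simp [rest, Set.ncard_univ]
  | succ k ih =>
    rcases eq_or_ne (rest lt (k+1)) ∅ with he | hne
    · exact Or.inl he
    · right
      rcases ih with he | hle
      · exact absurd (by simp [rest, he]) hne
      · have hsub : rest lt (k+1) ⊂ rest lt k := by
          refine ⟨rest_succ_subset lt k, fun hsub' => ?_⟩
          have hrne : (rest lt k).Nonempty := by
            rw [Set.nonempty_iff_ne_empty]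
            intro h0
            exact hne (by simp [rest, h0])
          obtain ⟨a, ha⟩ := maxSet_nonempty h hrne
          have := hsub' ha.1
          exact (this : a ∈ rest lt (k+1)).2 ha
        have := Set.ncard_lt_ncard hsub (Set.toFinite _)
        omega

lemma rest_card_empty [Fintype V] {lt : V → V → Prop} (h : IsSPO lt) {k : ℕ}
    (hk : Fintype.card V ≤ k) : rest lt k = ∅ := by
  have := rest_card h k
  rcases this with he | hle
  · exact he
  · have : (rest lt k).ncard = 0 := by omega
    exact ((Set.ncard_eq_zero (Set.toFinite _)).1 this)

lemma cumul_mono (lt : V → V → Prop) : Monotone (cumul lt) := by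
  intro j k hjk
  exact diff_subset_diff_right (rest_antitone lt (by omega))

lemma cumul_univ [Fintype V] {lt : V → V → Prop} (h : IsSPO lt) {k : ℕ}
    (hk : Fintype.card V ≤ k + 1) : cumul lt k = univ := by
  simp [cumul, rest_card_empty h (le_trans hk (by omega) : Fintype.card V ≤ k + 1)]

noncomputable def idx (lt : V → V → Prop) (v : V) : ℕ := sInf {k | v ∈ cumul lt k}

lemma idx_set_nonempty [Fintype V] {lt : V → V → Prop} (h : IsSPO lt) (v : V) :
    {k | v ∈ cumul lt k}.Nonempty :=
  ⟨Fintype.card V, by show v ∈ cumul lt (Fintype.card V); rw [cumul_univ h (Nat.le_succ _)]; trivial⟩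

lemma mem_cumul_idx [Fintype V] {lt : V → V → Prop} (h : IsSPO lt) (v : V) :
    v ∈ cumul lt (idx lt v) := Nat.sInf_mem (idx_set_nonempty h v)

lemma idx_le {lt : V → V → Prop} {v : V} {k : ℕ} (hv : v ∈ cumul lt k) :
    idx lt v ≤ k := Nat.sInf_le hv

lemma mem_rest_of_lt {lt : V → V → Prop} {u v : V} (huv : lt u v) :
    ∀ k, v ∈ rest lt k → u ∈ rest lt (k+1) := by
  intro k
  induction k with
  | zero =>
    intro _
    refine ⟨trivial, fun hm => hm.2 v trivial huv⟩
  | succ k ih =>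
    intro hv
    have hu : u ∈ rest lt (k+1) := ih (rest_succ_subset lt k hv)
    exact ⟨hu, fun hm => hm.2 v hv huv⟩

lemma idx_lt_of_lt [Fintype V] {lt : V → V → Prop} (h : IsSPO lt) {u v : V}
    (huv : lt u v) : idx lt v < idx lt u := by
  have hu : u ∉ rest lt (idx lt u + 1) := (mem_cumul_idx h u).2
  have hv : v ∉ rest lt (idx lt u) := fun hv => hu (mem_rest_of_lt huv _ hv)
  cases hiu : idx lt u with
  | zero => exact absurd (by rw [hiu] at hv; exact hv trivial) (fun x => x)
  | succ b =>
    rw [hiu] at hv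
    have : v ∈ cumul lt b := ⟨trivial, hv⟩
    have := idx_le this
    omega

lemma rest_measure (f : V → ℕ) :
    ∀ k (v : V), v ∈ rest (fun a b => f b < f a) k → k ≤ f v := by
  intro k
  induction k with
  | zero => intro v _; omega
  | succ k ih =>
    intro v hv
    obtain ⟨hvk, hnm⟩ := hv
    have : ∃ w ∈ rest (fun a b => f b < f a) k, f w < f v := by
      by_contra hc
      push_neg at hc
      exact hnm ⟨hvk, fun w hw hlt => absurd hlt (not_lt.2 (hc w hw))⟩
    obtain ⟨w, hw, hfw⟩ := this
    have := ih w hw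
    omega

lemma mem_cumul_measure {f : V → ℕ} {v : V} {k : ℕ} (hf : f v ≤ k) :
    v ∈ cumul (fun a b => f b < f a) k := by
  refine ⟨trivial, fun hv => ?_⟩
  have := rest_measure f (k+1) v hv
  omega

lemma layer_empty_iff [Finite V] {lt : V → V → Prop} (h : IsSPO lt) (j : ℕ) :
    layer lt j = ∅ ↔ rest lt j = ∅ := by
  constructor
  · intro hl
    by_contra hr
    obtain ⟨a, ha⟩ := maxSet_nonempty h (Set.nonempty_iff_ne_empty.2 hr)
    exact absurd hl (Set.nonempty_iff_ne_empty.1 ⟨a, ha⟩)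
  · intro hr
    have : maxSet lt (rest lt j) ⊆ rest lt j := fun u hu => hu.1
    rw [layer]
    rw [hr] at this ⊢
    exact Set.subset_empty_iff.1 this

-- the merged gflow

lemma merge_gflow [Fintype V] {G : SimpleGraph V} {I O : Set V}
    {g g' : V → Set V} {lt lt' : V → V → Prop}
    (hf : IsGFlow G I O g lt) (hf' : IsGFlow G I O g' lt') :
    ∃ (g'' : V → Set V) (lt'' : V → V → Prop), IsGFlow G I O g'' lt'' ∧
      ∀ k, cumul lt k ⊆ cumul lt'' k ∧ cumul lt' k ⊆ cumul lt'' k := by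
  classical
  obtain ⟨hspo, hP, hlt, hodd, hself⟩ := hf
  obtain ⟨hspo', hP', hlt', hodd', hself'⟩ := hf'
  set m : V → ℕ := fun v => min (idx lt v) (idx lt' v) with hm
  set L : V → V → Prop := fun a b => m b < m a with hL
  set g'' : V → Set V := fun v => if idx lt v ≤ idx lt' v then g v else g' v with hg''
  refine ⟨g'', L, ⟨⟨fun a => by simp [hL], fun a b c h1 h2 => by simp only [hL] at *; omega⟩,
      ?_, ?_, ?_, ?_⟩, ?_⟩
  · intro i hi
    by_cases hc : idx lt i ≤ idx lt' i <;> simp only [hg'', hc, if_pos, if_neg, if_true, if_false]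
    · exact hP i hi
    · exact hP' i hi
  · intro i hi j hj
    by_cases hc : idx lt i ≤ idx lt' i
    · simp only [hg'', hc, if_true] at hj
      have h1 : idx lt j < idx lt i := idx_lt_of_lt hspo (hlt i hi j hj)
      simp only [hL, hm]
      omega
    · simp only [hg'', hc, if_false] at hj
      have h1 : idx lt' j < idx lt' i := idx_lt_of_lt hspo' (hlt' i hi j hj)
      simp only [hL, hm]
      omega
  · intro i hi j hj
    by_cases hc : idx lt i ≤ idx lt' i
    · simp only [hg'', hc, if_true] at hj
      rcases hodd i hi j hj with he | hl
      · exact Or.inl he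
      · have h1 : idx lt j < idx lt i := idx_lt_of_lt hspo hl
        right; simp only [hL, hm]; omega
    · simp only [hg'', hc, if_false] at hj
      rcases hodd' i hi j hj with he | hl
      · exact Or.inl he
      · have h1 : idx lt' j < idx lt' i := idx_lt_of_lt hspo' hl
        right; simp only [hL, hm]; omega
  · intro i hi
    by_cases hc : idx lt i ≤ idx lt' i <;>
      simp only [hg'', hc, if_true, if_false]
    · exact hself i hi
    · exact hself' i hi
  · intro k
    constructor
    · intro v hv
      have : m v ≤ k := le_trans (min_le_left _ _) (idx_le hv)
      exact mem_cumul_measure this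
    · intro v hv
      have : m v ≤ k := le_trans (min_le_right _ _) (idx_le hv)
      exact mem_cumul_measure this

lemma cumul_dominates [Fintype V] {G : SimpleGraph V} {I O : Set V}
    {g : V → Set V} {lt : V → V → Prop} (hmd : MaxDelayedGFlow G I O g lt)
    {g' : V → Set V} {lt' : V → V → Prop} (hf' : IsGFlow G I O g' lt') :
    ∀ k, cumul lt' k ⊆ cumul lt k := by
  obtain ⟨hf, hmax⟩ := hmd
  obtain ⟨g'', lt'', hf'', hsub⟩ := merge_gflow hf hf'
  intro k
  have h1 : ∀ k, (cumul lt k).ncard ≤ (cumul lt'' k).ncard :=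
    fun k => Set.ncard_le_ncard (hsub k).1 (Set.toFinite _)
  have hnm : ¬ MoreDelayed lt'' lt := hmax g'' lt'' hf''
  have h2 : ∀ k, (cumul lt'' k).ncard ≤ (cumul lt k).ncard := by
    intro j
    by_contra hc
    exact hnm ⟨h1, j, by omega⟩
  have heq : cumul lt k = cumul lt'' k :=
    Set.eq_of_subset_of_ncard_le (hsub k).1 (h2 k) (Set.toFinite _)
  rw [heq]
  exact (hsub k).2

theorem exists_max_delayed_gflow_and_optimal {V : Type*} [Fintype V] (G : SimpleGraph V)
    (I O : Set V) (h : ∃ (g : V → Set V) (lt : V → V → Prop), IsGFlow G I O g lt) :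
    (∃ (g : V → Set V) (lt : V → V → Prop), MaxDelayedGFlow G I O g lt) ∧
    (∀ (g : V → Set V) (lt : V → V → Prop), MaxDelayedGFlow G I O g lt →
      ∀ (g' : V → Set V) (lt' : V → V → Prop), IsGFlow G I O g' lt' →
        flowDepth lt ≤ flowDepth lt') := by
  classical
  set n := Fintype.card V with hn
  set F : (V → V → Prop) → ℕ := fun lt => ∑ k ∈ Finset.range (n+1), (cumul lt k).ncard with hF
  constructor
  · -- existence
    set T : Set ℕ := {s | ∃ g lt, IsGFlow G I O g lt ∧ F lt = s} with hT
    have hTne : T.Nonempty := by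
      obtain ⟨g, lt, hg⟩ := h
      exact ⟨F lt, g, lt, hg, rfl⟩
    have hTbdd : BddAbove T := by
      refine ⟨(n+1) * n, fun s hs => ?_⟩
      obtain ⟨g, lt, _, rfl⟩ := hs
      calc F lt ≤ ∑ k ∈ Finset.range (n+1), n := by
              apply Finset.sum_le_sum
              intro k _
              have : (cumul lt k).ncard ≤ (Set.univ : Set V).ncard :=
                Set.ncard_le_ncard (subset_univ _) (Set.toFinite _)
              simpa [Set.ncard_univ] using this
        _ = (n+1) * n := by simp [mul_comm]
    have hmem := Nat.sSup_mem hTne hTbdd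
    obtain ⟨g0, lt0, hg0, hFeq⟩ := hmem
    refine ⟨g0, lt0, hg0, ?_⟩
    intro g' lt' hg' ⟨hle, k0, hstrict⟩
    have hspo0 : IsSPO lt0 := hg0.1
    have hspo' : IsSPO lt' := hg'.1
    have hk0 : k0 < n + 1 := by
      by_contra hc
      push_neg at hc
      have h1 : cumul lt0 k0 = univ := cumul_univ hspo0 (by omega)
      have h2 : (cumul lt' k0).ncard ≤ n := by
        have := Set.ncard_le_ncard (subset_univ (cumul lt' k0)) (Set.toFinite _)
        simpa [Set.ncard_univ, Nat.card_eq_fintype_card] using this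
      rw [h1, Set.ncard_univ, Nat.card_eq_fintype_card] at hstrict
      omega
    have hFlt : F lt0 < F lt' := by
      apply Finset.sum_lt_sum
      · intro k _; exact hle k
      · exact ⟨k0, Finset.mem_range.2 hk0, hstrict⟩
    have : F lt' ∈ T := ⟨g', lt', hg', rfl⟩
    have := le_csSup hTbdd this
    omega
  · -- optimality
    intro g lt hmd g' lt' hf'
    have hspo : IsSPO lt := hmd.1.1
    have hspo' : IsSPO lt' := hf'.1
    have hdom := cumul_dominates hmd hf'
    -- d' := flowDepth lt'
    have hS'ne : {d | layer lt' (d+1) = ∅}.Nonempty := by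
      refine ⟨n, ?_⟩
      show layer lt' (n+1) = ∅
      rw [layer_empty_iff hspo']
      exact rest_card_empty hspo' (by omega)
    have hd' : layer lt' (flowDepth lt' + 1) = ∅ := Nat.sInf_mem hS'ne
    have hrest' : rest lt' (flowDepth lt' + 1) = ∅ := (layer_empty_iff hspo' _).1 hd'
    have hcum' : cumul lt' (flowDepth lt') = univ := by
      rw [cumul, hrest', diff_empty]
    have hcum : cumul lt (flowDepth lt') = univ := by
      apply Set.eq_univ_of_univ_subset
      rw [← hcum']
      exact hdom _
    have hrest : rest lt (flowDepth lt' + 1) = ∅ := by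
      rw [cumul] at hcum
      by_contra hne
      obtain ⟨a, ha⟩ := Set.nonempty_iff_ne_empty.2 hne
      have ha2 : a ∈ univ \ rest lt (flowDepth lt' + 1) := by rw [hcum]; trivial
      exact ha2.2 ha
    have : layer lt (flowDepth lt' + 1) = ∅ := (layer_empty_iff hspo _).2 hrest
    exact Nat.sInf_le this
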